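/- A word over the alphabet {0,1,_} is valid (in the recursive sense: _0_ is valid, and validity is preserved by the substitutions 0 ↦ 0_1_1_0 and 1 ↦ 1_0_0_1 applied with surrounding structure) if and only if it is obtained from some T_{2i}, i ∈ ℕ, by inserting the separator _ at the beginning, between every two consecutive symbols, and at the end. -/
import Mathlib


/-- The alphabet {0, 1, _}. -/
inductive PSym : Type
  | zero : PSym
  | one : PSym
  | sep : PSym
deriving DecidableEq

def ofBool (b : Bool) : PSym := if b then PSym.one else PSym.zero

/-- Padding: `pad (w₁ … w_m) = _ w₁ _ w₂ _ … _ w_m _`. -/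
def pad (w : List Bool) : List PSym :=
  PSym.sep :: w.flatMap (fun b => [ofBool b, PSym.sep])

/-- The substitution 0 ↦ 0110, 1 ↦ 1001 on binary words. -/
def sub4 (w : List Bool) : List Bool :=
  w.flatMap (fun b =>
    if b then [true, false, false, true] else [false, true, true, false])

/-- Valid words over {0, 1, _}: `_0_` is valid, and validity is preserved by the
substitutions 0 ↦ 0_1_1_0 and 1 ↦ 1_0_0_1 (realised at the padded level). -/
inductive Valid : List PSym → Prop
  | base : Valid (pad [false])
  | step (w : List Bool) : Valid (pad w) → Valid (pad (sub4 w))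

def wcompl (w : List Bool) : List Bool := w.map (fun b => !b)

def T : ℕ → List Bool
  | 0 => [false]
  | i + 1 => T i ++ wcompl (T i)

def tmstep (w : List Bool) : List Bool := w.flatMap (fun b => [b, !b])

lemma tmstep_append (u v : List Bool) : tmstep (u ++ v) = tmstep u ++ tmstep v := by
  simp [tmstep]

lemma tmstep_compl (w : List Bool) : tmstep (wcompl w) = wcompl (tmstep w) := by
  induction w with
  | nil => rfl
  | cons a w ih => cases a <;> simp [tmstep, wcompl] at ih ⊢ <;> exact ih

lemma tmstep_T (i : ℕ) : tmstep (T i) = T (i + 1) := by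
  induction i with
  | zero => rfl
  | succ i ih =>
    show tmstep (T i ++ wcompl (T i)) = T (i + 1) ++ wcompl (T (i + 1))
    rw [tmstep_append, tmstep_compl, ih]

lemma sub4_eq (w : List Bool) : sub4 w = tmstep (tmstep w) := by
  induction w with
  | nil => rfl
  | cons a w ih => cases a <;> simp [sub4, tmstep] at ih ⊢ <;> exact ih

lemma sub4_T (i : ℕ) : sub4 (T (2 * i)) = T (2 * (i + 1)) := by
  rw [sub4_eq, tmstep_T, tmstep_T]
  ring_nf

lemma ofBool_inj {a b : Bool} (h : ofBool a = ofBool b) : a = b := by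
  cases a <;> cases b <;> simp_all [ofBool]

lemma pad_inj {u v : List Bool} (h : pad u = pad v) : u = v := by
  induction u generalizing v with
  | nil => cases v with
    | nil => rfl
    | cons b v => simp [pad] at h
  | cons a u ih =>
    cases v with
    | nil => simp [pad] at h
    | cons b v =>
      simp [pad] at h
      obtain ⟨h1, h2⟩ := h
      have hp : pad u = pad v := by simp [pad, h2]
      rw [ofBool_inj h1, ih hp]

theorem valid_iff_padded_thue_morse :
    ∀ X : List PSym, Valid X ↔ ∃ i : ℕ, X = pad (T (2 * i)) := by
  intro X
  constructor
  · intro h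
    induction h with
    | base => exact ⟨0, rfl⟩
    | step w _ ih =>
      obtain ⟨i, hi⟩ := ih
      refine ⟨i + 1, ?_⟩
      rw [pad_inj hi, sub4_T]
  · rintro ⟨i, rfl⟩
    induction i with
    | zero => exact Valid.base
    | succ i ih =>
      have := Valid.step (T (2 * i)) ih
      rwa [sub4_T] at this
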